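/- arXiv:0909.2356 — 8 statements merged into one kernel-verified Lean document; each statement's English description precedes it below -/
import Mathlib

section
/- (Equation (41): additivity of displacement functions.) Let w₁, w₂, w₃ be permutations of Fin (n+1) such that Inv(w₃) = Inv(w₁) ⊔ Inv(w₂), i.e. Inv(w₁) ∩ Inv(w₂) = ∅ and Inv(w₁) ∪ Inv(w₂) = Inv(w₃). Then for every i ∈ Fin (n+1), w₃(i) + i = w₁(i) + w₂(i); equivalently δ_{w₃} = δ_{w₁} + δ_{w₂}, where δ_w(i) := w(i) − i. -/
/-!
`w i` counts the `j` with `w j < w i` and `i` counts the `j < i`; after cancelling the `j < i`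
with `w j < w i`, the displacement `w i - i` is the number of inversions with `i` in the first
slot minus the number with `i` in the second slot. Such counts are additive over a disjoint
union of inversion sets.
-/

open Finset

/-- The inversion set of a permutation `w`: pairs `(i,j)` with `i < j` and `w i > w j`. -/
def InvSet {m : ℕ} (w : Equiv.Perm (Fin m)) : Finset (Fin m × Fin m) :=
  Finset.univ.filter fun p => p.1 < p.2 ∧ w p.2 < w p.1

namespace Equiv.Perm

variable {m : ℕ} (w : Perm (Fin m)) (i : Fin m)

theorem card_filter_apply_lt_apply : #{j | w j < w i} = w i := by
  rw [← Fin.card_Iio (w i), ← filter_gt_eq_Iio]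
  exact card_bij (fun j _ => w j) (by simp) (fun _ _ _ _ h => w.injective h)
    (fun k hk => ⟨w.symm k, by simpa using hk, by simp⟩)

theorem apply_sub_self_eq :
    (w i : ℤ) - i = #{j | i < j ∧ w j < w i} - #{j | j < i ∧ w i < w j} := by
  rw [← card_filter_apply_lt_apply, ← Fin.card_Iio i, ← filter_gt_eq_Iio]
  simp only [natCast_card_filter, ← sum_sub_distrib]
  refine sum_congr rfl fun j _ => ?_
  split_ifs <;> grind [w.injective.eq_iff]

theorem card_filter_invSet_fst_eq :
    #{p ∈ InvSet w | p.1 = i} = #{j | i < j ∧ w j < w i} := by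
  rw [← card_map (Function.Embedding.sectR i (Fin m))]
  congr 1
  ext ⟨a, b⟩
  simp only [InvSet, mem_filter, mem_univ, true_and, mem_map, Function.Embedding.sectR_apply,
    Prod.mk.injEq, exists_eq_right_right]
  grind

theorem card_filter_invSet_snd_eq :
    #{p ∈ InvSet w | p.2 = i} = #{j | j < i ∧ w i < w j} := by
  rw [← card_map (Function.Embedding.sectL (Fin m) i)]
  congr 1
  ext ⟨a, b⟩
  simp only [InvSet, mem_filter, mem_univ, true_and, mem_map, Function.Embedding.sectL_apply,
    Prod.mk.injEq]
  grind

theorem apply_sub_self_eq_card_invSet :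
    (w i : ℤ) - i = #{p ∈ InvSet w | p.1 = i} - #{p ∈ InvSet w | p.2 = i} := by
  rw [card_filter_invSet_fst_eq, card_filter_invSet_snd_eq, apply_sub_self_eq]

end Equiv.Perm

theorem stmt_2 (n : ℕ) (w₁ w₂ w₃ : Equiv.Perm (Fin (n + 1)))
    (hdisj : Disjoint (InvSet w₁) (InvSet w₂))
    (hunion : InvSet w₁ ∪ InvSet w₂ = InvSet w₃) :
    ∀ i : Fin (n + 1), (w₃ i : ℤ) + (i : ℤ) = (w₁ i : ℤ) + (w₂ i : ℤ) := by
  intro i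
  have card_filter_invSet_eq_add (P : Fin (n + 1) × Fin (n + 1) → Prop) [DecidablePred P] :
      #{p ∈ InvSet w₃ | P p} = #{p ∈ InvSet w₁ | P p} + #{p ∈ InvSet w₂ | P p} := by
    rw [← hunion, filter_union, card_union_of_disjoint (disjoint_filter_filter hdisj)]
  have h₁ := w₁.apply_sub_self_eq_card_invSet i
  have h₂ := w₂.apply_sub_self_eq_card_invSet i
  have h₃ := w₃.apply_sub_self_eq_card_invSet i
  rw [card_filter_invSet_eq_add, card_filter_invSet_eq_add] at h₃
  push_cast at h₃
  linarith
end

section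
/- Let w₁, w₂, w₃ be permutations of Fin (n+1) such that Inv(w₃) = Inv(w₁) ⊔ Inv(w₂) (disjoint union). Then for all λ', μ', ν' : Fin (n+1) → ℤ, the affine-action equation w₃⁻¹ ∙ ν' = w₁⁻¹ ∙ λ' + w₂⁻¹ ∙ μ' holds if and only if the homogeneous-action equation ν' = w₃·(w₁⁻¹·λ' + w₂⁻¹·μ') holds. -/
/-!
Counting the inversions that start resp. end at `i` gives, for every permutation `w`,
`w i - i = #{(i, j) ∈ Inv w} - #{(j, i) ∈ Inv w}`. The right-hand side is additive under
`Inv w₃ = Inv w₁ ⊔ Inv w₂`, so `w₃ i + i = w₁ i + w₂ i`, i.e. `ρ (w₃ i) + ρ i = ρ (w₁ i) + ρ (w₂ i)`.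
This is exactly what makes the `ρ`-terms cancel in the affine equation evaluated at `i`,
`ν (w₃ i) + ρ (w₃ i) - ρ i = λ (w₁ i) + ρ (w₁ i) - ρ i + μ (w₂ i) + ρ (w₂ i) - ρ i`,
leaving the homogeneous one.
-/

open Finset

/-- `ρ(i) = n - i` for `i : Fin (n+1)`. -/
def rho (n : ℕ) : Fin (n + 1) → ℤ := fun i => (n : ℤ) - (i : ℤ)

/-- The homogeneous action `(w·λ)(i) = λ(w⁻¹ i)`. -/
def hAct {m : ℕ} (w : Equiv.Perm (Fin m)) (l : Fin m → ℤ) : Fin m → ℤ :=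
  fun i => l (w⁻¹ i)

/-- The affine action `w ∙ λ = w·(λ + ρ) − ρ`. -/
def aAct (n : ℕ) (w : Equiv.Perm (Fin (n + 1))) (l : Fin (n + 1) → ℤ) : Fin (n + 1) → ℤ :=
  fun i => l (w⁻¹ i) + rho n (w⁻¹ i) - rho n i

theorem card_invSet_filter_fst {m : ℕ} (w : Equiv.Perm (Fin m)) (i : Fin m) :
    #{p ∈ InvSet w | p.1 = i} = #{j | i < j ∧ w j < w i} := by
  refine card_nbij' Prod.snd (fun j => (i, j)) ?_ ?_ ?_ ?_ <;> intro p <;>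
    aesop (add simp InvSet)

theorem card_invSet_filter_snd {m : ℕ} (w : Equiv.Perm (Fin m)) (i : Fin m) :
    #{p ∈ InvSet w | p.2 = i} = #{j | j < i ∧ w i < w j} := by
  refine card_nbij' Prod.fst (fun j => (j, i)) ?_ ?_ ?_ ?_ <;> intro p <;>
    aesop (add simp InvSet)

theorem val_apply_add_card_invSet_filter_snd {m : ℕ} (w : Equiv.Perm (Fin m)) (i : Fin m) :
    (w i : ℕ) + #{p ∈ InvSet w | p.2 = i} = i + #{p ∈ InvSet w | p.1 = i} := by
  rw [card_invSet_filter_fst, card_invSet_filter_snd]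
  have card_below_w : #{j | w j < w i} = (w i : ℕ) := by
    rw [← Fin.card_Iio (w i)]
    exact card_equiv w (by simp)
  have card_below : #{j | j < i} = (i : ℕ) := by
    rw [filter_gt_eq_Iio, Fin.card_Iio]
  have split_below_w :
      #{j | j < i ∧ w j < w i} + #{j | i < j ∧ w j < w i} = #{j | w j < w i} := by
    rw [← card_filter_add_card_filter_not (s := {j | w j < w i}) (· < i), filter_filter,
      filter_filter]
    congr 2 <;> ext j <;> simp only [mem_filter, mem_univ, true_and]
    · exact and_comm
    · grind
  have split_below :
      #{j | j < i ∧ w j < w i} + #{j | j < i ∧ w i < w j} = #{j | j < i} := by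
    rw [← card_filter_add_card_filter_not (s := {j | j < i}) (fun j => w j < w i),
      filter_filter, filter_filter]
    congr 2; ext j; simp only [mem_filter, mem_univ, true_and]
    have hw_ne := (w.injective.ne_iff (x := j) (y := i)).2
    grind
  omega

theorem card_filter_of_disjoint_of_union_eq {α : Type*} [DecidableEq α] {s t u : Finset α}
    (hst : Disjoint s t) (hu : s ∪ t = u) (p : α → Prop) [DecidablePred p] :
    #{x ∈ u | p x} = #{x ∈ s | p x} + #{x ∈ t | p x} := by
  rw [← hu, filter_union, card_union_of_disjoint (disjoint_filter_filter hst)]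

theorem val_apply_add_val_of_invSet_disjoint_union {m : ℕ} {w₁ w₂ w₃ : Equiv.Perm (Fin m)}
    (hdisj : Disjoint (InvSet w₁) (InvSet w₂)) (hunion : InvSet w₁ ∪ InvSet w₂ = InvSet w₃)
    (i : Fin m) : (w₃ i : ℕ) + i = w₁ i + w₂ i := by
  have h₁ := val_apply_add_card_invSet_filter_snd w₁ i
  have h₂ := val_apply_add_card_invSet_filter_snd w₂ i
  have h₃ := val_apply_add_card_invSet_filter_snd w₃ i
  rw [card_filter_of_disjoint_of_union_eq hdisj hunion,
    card_filter_of_disjoint_of_union_eq hdisj hunion] at h₃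
  omega

theorem aAct_inv_apply (n : ℕ) (w : Equiv.Perm (Fin (n + 1))) (l : Fin (n + 1) → ℤ)
    (i : Fin (n + 1)) : aAct n w⁻¹ l i = l (w i) + rho n (w i) - rho n i := by
  simp only [aAct, inv_inv]

theorem eq_hAct_iff {m : ℕ} (w : Equiv.Perm (Fin m)) (f g : Fin m → ℤ) :
    f = hAct w g ↔ ∀ i, f (w i) = g i := by
  rw [funext_iff, ← w.forall_congr_right]
  simp only [hAct, Equiv.Perm.inv_def, Equiv.symm_apply_apply]

theorem stmt_3 (n : ℕ) (w₁ w₂ w₃ : Equiv.Perm (Fin (n + 1)))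
    (hdisj : Disjoint (InvSet w₁) (InvSet w₂))
    (hunion : InvSet w₁ ∪ InvSet w₂ = InvSet w₃) :
    ∀ lam mu nu : Fin (n + 1) → ℤ,
      aAct n w₃⁻¹ nu = aAct n w₁⁻¹ lam + aAct n w₂⁻¹ mu ↔
        nu = hAct w₃ (hAct w₁⁻¹ lam + hAct w₂⁻¹ mu) := by
  intro lam mu nu
  have hrho (i : Fin (n + 1)) : rho n (w₃ i) + rho n i = rho n (w₁ i) + rho n (w₂ i) := by
    have := val_apply_add_val_of_invSet_disjoint_union hdisj hunion i
    simp only [rho]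
    omega
  rw [funext_iff, eq_hAct_iff]
  refine forall_congr' fun i => ?_
  simp only [Pi.add_apply, aAct_inv_apply, hAct, inv_inv]
  constructor <;> intro h <;> linarith [hrho i]
end

section
/- Let λ, μ : Fin (n+1) → ℤ and suppose both are far from the walls, in the sense that for all i ≠ j one has 2·|(λ+ρ)(i) − (λ+ρ)(j)| > n and 2·|(μ+ρ)(i) − (μ+ρ)(j)| > n. Then Φ_{λ+μ} ⊆ Φ_λ ∪ Φ_μ; that is, for every pair i < j, if (λ+μ+ρ)(i) < (λ+μ+ρ)(j) then (λ+ρ)(i) < (λ+ρ)(j) or (μ+ρ)(i) < (μ+ρ)(j). -/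
/-!
If `(i, j)` with `i < j` lies in neither `Φ_λ` nor `Φ_μ`, the wall conditions force both
`(λ+ρ)(i) - (λ+ρ)(j)` and `(μ+ρ)(i) - (μ+ρ)(j)` to exceed `n / 2`. Since
`λ + μ + ρ = (λ+ρ) + (μ+ρ) - ρ` and `ρ(i) - ρ(j) = j - i ≤ n`, the difference
`(λ+μ+ρ)(i) - (λ+μ+ρ)(j)` is then positive, so `(i, j) ∉ Φ_{λ+μ}`.
-/

open Finset

/-- `Φ_λ`: pairs `(i,j)` with `i < j` and `(λ+ρ)(i) < (λ+ρ)(j)`. -/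
def Phi (n : ℕ) (l : Fin (n + 1) → ℤ) : Finset (Fin (n + 1) × Fin (n + 1)) :=
  Finset.univ.filter fun p => p.1 < p.2 ∧ l p.1 + rho n p.1 < l p.2 + rho n p.2

def FarFromWalls (n : ℕ) (l : Fin (n + 1) → ℤ) : Prop :=
  ∀ i j : Fin (n + 1), i ≠ j → 2 * |(l i + rho n i) - (l j + rho n j)| > (n : ℤ)

theorem mem_Phi {n : ℕ} {l : Fin (n + 1) → ℤ} {p : Fin (n + 1) × Fin (n + 1)} :
    p ∈ Phi n l ↔ p.1 < p.2 ∧ l p.1 + rho n p.1 < l p.2 + rho n p.2 := by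
  simp [Phi]

theorem rho_sub_rho_le {n : ℕ} (i j : Fin (n + 1)) : rho n i - rho n j ≤ n := by
  have := j.is_lt
  simp only [rho]
  omega

theorem FarFromWalls.lt_two_mul_sub {n : ℕ} {l : Fin (n + 1) → ℤ} (hl : FarFromWalls n l)
    {i j : Fin (n + 1)} (hij : i ≠ j) (hle : l j + rho n j ≤ l i + rho n i) :
    (n : ℤ) < 2 * ((l i + rho n i) - (l j + rho n j)) := by
  simpa only [abs_of_nonneg (sub_nonneg.mpr hle)] using hl i j hij

theorem FarFromWalls.add_rho_le_add_rho {n : ℕ} {l m : Fin (n + 1) → ℤ}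
    (hl : FarFromWalls n l) (hm : FarFromWalls n m) {i j : Fin (n + 1)} (hij : i ≠ j)
    (hlij : l j + rho n j ≤ l i + rho n i) (hmij : m j + rho n j ≤ m i + rho n i) :
    (l + m) j + rho n j ≤ (l + m) i + rho n i := by
  have hl' := hl.lt_two_mul_sub hij hlij
  have hm' := hm.lt_two_mul_sub hij hmij
  have hρ := rho_sub_rho_le i j
  simp only [Pi.add_apply]
  linarith

theorem stmt_5 (n : ℕ) (lam mu : Fin (n + 1) → ℤ)
    (hlam : ∀ i j : Fin (n + 1), i ≠ j →
      2 * |(lam i + rho n i) - (lam j + rho n j)| > (n : ℤ))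
    (hmu : ∀ i j : Fin (n + 1), i ≠ j →
      2 * |(mu i + rho n i) - (mu j + rho n j)| > (n : ℤ)) :
    Phi n (lam + mu) ⊆ Phi n lam ∪ Phi n mu := by
  rintro ⟨i, j⟩ hp
  obtain ⟨hij, hsum⟩ := mem_Phi.mp hp
  by_contra h
  simp only [mem_union, mem_Phi, not_or, not_and, not_lt] at h
  exact (FarFromWalls.add_rho_le_add_rho hlam hmu hij.ne (h.1 hij) (h.2 hij)).not_gt hsum
end

section
/- (Existence of a reduction step.) Let w₁, w₂, w₃ be permutations of Fin (n+1) with Inv(w₃) = Inv(w₁) ⊔ Inv(w₂) (disjoint union), and let λ', μ', ν' : Fin (n+1) → ℤ satisfy w₃⁻¹ ∙ ν' = w₁⁻¹ ∙ λ' + w₂⁻¹ ∙ μ'. Set i := w₁(n), j := w₂(n), k := w₃(n) (where n denotes the last element of Fin (n+1)). Then i + j = k + n and λ'(i) + μ'(j) = ν'(k). -/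
/-!
A pair `(p, n)` ending at the last position is an inversion of `w` exactly when `w p > w n`, so
`w` has `n - w(n)` such inversions. Since `Inv(w₃) = Inv(w₁) ⊔ Inv(w₂)`, these counts add:
`(n - i) + (n - j) = n - k`, i.e. `i + j = k + n`. Evaluating the identity of affine actions at
the last position, where `ρ` vanishes, gives `ν'(k) + (n - k) = λ'(i) + (n - i) + μ'(j) + (n - j)`,
and the first relation cancels the `ρ`-terms.
-/

open Finset

lemma aAct_inv_apply_last (n : ℕ) (w : Equiv.Perm (Fin (n + 1))) (l : Fin (n + 1) → ℤ) :
    aAct n w⁻¹ l (Fin.last n) = l (w (Fin.last n)) + n - (w (Fin.last n) : ℕ) := by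
  simp [aAct, rho, add_sub_assoc]

lemma card_invSet_filter_snd_eq_last (n : ℕ) (w : Equiv.Perm (Fin (n + 1))) :
    #{p ∈ InvSet w | p.2 = Fin.last n} = n - (w (Fin.last n) : ℕ) := by
  have hbij : #{p ∈ InvSet w | p.2 = Fin.last n} = #(Ioi (w (Fin.last n))) := by
    refine card_nbij' (fun p => w p.1) (fun a => (w.symm a, Fin.last n)) ?_ ?_ ?_ ?_
    · rintro ⟨i, j⟩ h
      simp only [InvSet, coe_filter, mem_filter, mem_univ, true_and, Set.mem_ofPred_eq] at h
      obtain ⟨⟨-, hw⟩, rfl⟩ := h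
      simpa using hw
    · intro a ha
      have hne : w.symm a ≠ Fin.last n := by
        rintro h
        rw [← h, Equiv.apply_symm_apply] at ha
        simp at ha
      simpa [InvSet, Fin.lt_last_iff_ne_last, hne] using ha
    · rintro ⟨i, j⟩ h
      simp only [coe_filter, Set.mem_ofPred_eq] at h
      simp [h.2]
    · intro a _
      simp
  rw [hbij, Fin.card_Ioi]
  rfl

lemma apply_last_add_apply_last_of_invSet_union (n : ℕ) (w₁ w₂ w₃ : Equiv.Perm (Fin (n + 1)))
    (hdisj : Disjoint (InvSet w₁) (InvSet w₂)) (hunion : InvSet w₁ ∪ InvSet w₂ = InvSet w₃) :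
    (w₁ (Fin.last n) : ℕ) + w₂ (Fin.last n) = w₃ (Fin.last n) + n := by
  have hcard : (n - (w₁ (Fin.last n) : ℕ)) + (n - w₂ (Fin.last n)) = n - w₃ (Fin.last n) := by
    rw [← card_invSet_filter_snd_eq_last, ← card_invSet_filter_snd_eq_last,
      ← card_invSet_filter_snd_eq_last, ← hunion, filter_union,
      card_union_of_disjoint (disjoint_filter_filter hdisj)]
  have h₁ := (w₁ (Fin.last n)).is_le
  have h₂ := (w₂ (Fin.last n)).is_le
  have h₃ := (w₃ (Fin.last n)).is_le
  omega

theorem stmt_9 (n : ℕ) (w₁ w₂ w₃ : Equiv.Perm (Fin (n + 1)))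
    (hdisj : Disjoint (InvSet w₁) (InvSet w₂))
    (hunion : InvSet w₁ ∪ InvSet w₂ = InvSet w₃)
    (lam mu nu : Fin (n + 1) → ℤ)
    (hchar : aAct n w₃⁻¹ nu = aAct n w₁⁻¹ lam + aAct n w₂⁻¹ mu) :
    ((w₁ (Fin.last n) : ℕ) + (w₂ (Fin.last n) : ℕ) = (w₃ (Fin.last n) : ℕ) + n) ∧
      lam (w₁ (Fin.last n)) + mu (w₂ (Fin.last n)) = nu (w₃ (Fin.last n)) := by
  have hidx := apply_last_add_apply_last_of_invSet_union n w₁ w₂ w₃ hdisj hunion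
  refine ⟨hidx, ?_⟩
  have hlast := congrFun hchar (Fin.last n)
  rw [Pi.add_apply, aAct_inv_apply_last, aAct_inv_apply_last, aAct_inv_apply_last] at hlast
  have hidxℤ : ((w₁ (Fin.last n) : ℕ) : ℤ) + (w₂ (Fin.last n) : ℕ) = (w₃ (Fin.last n) : ℕ) + n := by
    exact_mod_cast hidx
  linarith
end

section
/- (Equation (60): reduction preserves the disjoint-union condition.) Let w₁, w₂, w₃ be permutations of Fin (n+1) with Inv(w₃) = Inv(w₁) ⊔ Inv(w₂) (disjoint union). For m ∈ {1,2,3} define w̃_m : Fin n → Fin n by w̃_m(s) = w_m(s) if w_m(s) < w_m(n), and w̃_m(s) = w_m(s) − 1 if w_m(s) > w_m(n), where n denotes the last element of Fin (n+1). Then each w̃_m is a well-defined permutation of Fin n, and Inv(w̃₃) = Inv(w̃₁) ⊔ Inv(w̃₂). -/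
/-!
Removing the last position of `w` and closing the gap in the values does not change the relative
order of the remaining values, so `Inv(w̃)` is the restriction of `Inv(w)` to pairs of positions
below `n`. Restricting along an injective map commutes with disjoint unions.
-/

open Finset

/-- The reduced value of `w` at `s : Fin n`: `w(s)` if `w(s) < w(n)`, and `w(s) - 1`
if `w(s) > w(n)`. -/
def redVal {n : ℕ} (w : Equiv.Perm (Fin (n + 1))) (s : Fin n) : ℕ :=
  if (w s.castSucc : ℕ) < (w (Fin.last n) : ℕ) then (w s.castSucc : ℕ)
  else (w s.castSucc : ℕ) - 1

section Pattern

variable {m k : ℕ} {f : Fin m → Fin k}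

theorem invSet_eq_preimage_of_lt_iff {t : Equiv.Perm (Fin m)} {w : Equiv.Perm (Fin k)}
    (hf : StrictMono f) (h : ∀ i j, t i < t j ↔ w (f i) < w (f j)) :
    InvSet t = (InvSet w).preimage (Prod.map f f) (hf.injective.prodMap hf.injective).injOn := by
  ext ⟨i, j⟩
  simp only [InvSet, mem_preimage, Prod.map, mem_filter, mem_univ, true_and, hf.lt_iff_lt, h]

theorem invSet_disjoint_union_of_lt_iff {t₁ t₂ t₃ : Equiv.Perm (Fin m)}
    {w₁ w₂ w₃ : Equiv.Perm (Fin k)} (hf : StrictMono f)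
    (h₁ : ∀ i j, t₁ i < t₁ j ↔ w₁ (f i) < w₁ (f j))
    (h₂ : ∀ i j, t₂ i < t₂ j ↔ w₂ (f i) < w₂ (f j))
    (h₃ : ∀ i j, t₃ i < t₃ j ↔ w₃ (f i) < w₃ (f j))
    (hdisj : Disjoint (InvSet w₁) (InvSet w₂)) (hunion : InvSet w₁ ∪ InvSet w₂ = InvSet w₃) :
    Disjoint (InvSet t₁) (InvSet t₂) ∧ InvSet t₁ ∪ InvSet t₂ = InvSet t₃ := by
  rw [invSet_eq_preimage_of_lt_iff hf h₁, invSet_eq_preimage_of_lt_iff hf h₂,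
    invSet_eq_preimage_of_lt_iff hf h₃]
  refine ⟨disjoint_preimage hdisj, ?_⟩
  ext p
  simp only [mem_union, mem_preimage, ← hunion]

end Pattern

section Reduction

variable {n : ℕ} (w : Equiv.Perm (Fin (n + 1)))

theorem val_apply_castSucc_ne_val_apply_last (s : Fin n) :
    (w s.castSucc : ℕ) ≠ (w (Fin.last n) : ℕ) :=
  fun h => (Fin.castSucc_lt_last s).ne (w.injective (Fin.val_injective h))

theorem redVal_lt_redVal_iff (s₁ s₂ : Fin n) :
    redVal w s₁ < redVal w s₂ ↔ w s₁.castSucc < w s₂.castSucc := by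
  have h₁ := val_apply_castSucc_ne_val_apply_last w s₁
  have h₂ := val_apply_castSucc_ne_val_apply_last w s₂
  rw [Fin.lt_def]
  unfold redVal
  split_ifs <;> omega

theorem redVal_lt (s : Fin n) : redVal w s < n := by
  have h₁ := val_apply_castSucc_ne_val_apply_last w s
  have h₂ := (w s.castSucc).isLt
  have h₃ := (w (Fin.last n)).isLt
  unfold redVal
  split_ifs <;> omega

theorem redVal_injective : Function.Injective (redVal w) := by
  intro s₁ s₂ h
  apply Fin.castSucc_injective n
  apply w.injective
  by_contra hne
  rcases lt_or_gt_of_ne hne with hlt | hlt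
  · exact h.not_lt ((redVal_lt_redVal_iff w s₁ s₂).2 hlt)
  · exact h.not_gt ((redVal_lt_redVal_iff w s₂ s₁).2 hlt)

/-- The permutation `w̃` of `Fin n` obtained from `w` by deleting the last position. -/
noncomputable def redPerm : Equiv.Perm (Fin n) :=
  Equiv.ofBijective (fun s => ⟨redVal w s, redVal_lt w s⟩)
    (Finite.injective_iff_bijective.mp fun _ _ h => redVal_injective w (congrArg Fin.val h))

theorem val_redPerm (s : Fin n) : (redPerm w s : ℕ) = redVal w s := rfl

theorem redPerm_lt_redPerm_iff (s₁ s₂ : Fin n) :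
    redPerm w s₁ < redPerm w s₂ ↔ w s₁.castSucc < w s₂.castSucc :=
  redVal_lt_redVal_iff w s₁ s₂

end Reduction

theorem stmt_10 (n : ℕ) (w₁ w₂ w₃ : Equiv.Perm (Fin (n + 1)))
    (hdisj : Disjoint (InvSet w₁) (InvSet w₂))
    (hunion : InvSet w₁ ∪ InvSet w₂ = InvSet w₃) :
    ∃ t₁ t₂ t₃ : Equiv.Perm (Fin n),
      (∀ s : Fin n, (t₁ s : ℕ) = redVal w₁ s) ∧
      (∀ s : Fin n, (t₂ s : ℕ) = redVal w₂ s) ∧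
      (∀ s : Fin n, (t₃ s : ℕ) = redVal w₃ s) ∧
      Disjoint (InvSet t₁) (InvSet t₂) ∧ InvSet t₁ ∪ InvSet t₂ = InvSet t₃ :=
  ⟨redPerm w₁, redPerm w₂, redPerm w₃, val_redPerm w₁, val_redPerm w₂, val_redPerm w₃,
    invSet_disjoint_union_of_lt_iff Fin.strictMono_castSucc (redPerm_lt_redPerm_iff w₁)
      (redPerm_lt_redPerm_iff w₂) (redPerm_lt_redPerm_iff w₃) hdisj hunion⟩
end

section
/- (Reduction preserves the character equation.) Let w₁, w₂, w₃ be permutations of Fin (n+1) with Inv(w₃) = Inv(w₁) ⊔ Inv(w₂), let λ', μ', ν' : Fin (n+1) → ℤ satisfy w₃⁻¹ ∙ ν' = w₁⁻¹ ∙ λ' + w₂⁻¹ ∙ μ', and set i := w₁(n), j := w₂(n), k := w₃(n). Define λ̃' : Fin n → ℤ by λ̃'(s) = λ'(s) if s < i and λ̃'(s) = λ'(s+1) otherwise, and define μ̃', ν̃' analogously using j and k. Define w̃_m : Fin n → Fin n (m = 1,2,3) by w̃_m(s) = w_m(s) if w_m(s) < w_m(n) and w̃_m(s) = w_m(s) −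 1 otherwise. Then w̃₃⁻¹ ∙ ν̃' = w̃₁⁻¹ ∙ λ̃' + w̃₂⁻¹ ∙ μ̃', where ∙ now denotes the affine action of permutations of Fin n with ρ̃(s) = n − 1 − s. -/
/-!
Evaluated at `s < n`, the reduced equation is the original one at `s` with every term shifted.
Deleting the value `w(n)` lowers `w(s)` by one exactly when `(s, n)` is an inversion of `w`,
so with `ρ̃(s) = ρ(s) - 1` the term `w̃⁻¹ ∙ λ̃'` at `s` equals `(w⁻¹ ∙ λ')(s)` plus the
indicator of `(s, n) ∈ Inv(w)`. These indicators add up because `Inv(w₃)` is the disjoint union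
of `Inv(w₁)` and `Inv(w₂)`.
-/

open Finset

/-- The affine action `w ∙ λ = w·(λ + r) − r` with respect to a choice `r` of `ρ`. -/
def aActR {m : ℕ} (r : Fin m → ℤ) (w : Equiv.Perm (Fin m)) (l : Fin m → ℤ) : Fin m → ℤ :=
  fun i => l (w⁻¹ i) + r (w⁻¹ i) - r i

/-- `ρ̃(s) = n - 1 - s` for `s : Fin n`. -/
def rhoT (n : ℕ) : Fin n → ℤ := fun s => (n : ℤ) - 1 - (s : ℤ)

/-- The reduced character: drop the coordinate `i` from `l : Fin (n+1) → ℤ`. -/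
def redChar {n : ℕ} (l : Fin (n + 1) → ℤ) (i : Fin (n + 1)) (s : Fin n) : ℤ :=
  if (s : ℕ) < (i : ℕ) then l s.castSucc else l s.succ

lemma rhoT_eq_rho_castSucc_sub_one {n : ℕ} (s : Fin n) : rhoT n s = rho n s.castSucc - 1 := by
  simp only [rhoT, rho, Fin.val_castSucc]
  ring

lemma aActR_inv_apply {m : ℕ} (r : Fin m → ℤ) (w : Equiv.Perm (Fin m)) (l : Fin m → ℤ)
    (i : Fin m) : aActR r w⁻¹ l i = l (w i) + r (w i) - r i := by
  simp [aActR]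

lemma ite_mem_union_of_disjoint {α : Type*} [DecidableEq α] {A B : Finset α}
    (h : Disjoint A B) (x : α) :
    (if x ∈ A ∪ B then (1 : ℤ) else 0) = (if x ∈ A then 1 else 0) + (if x ∈ B then 1 else 0) := by
  by_cases hA : x ∈ A
  · simp [hA, disjoint_left.mp h hA]
  · simp [hA]

section Reduction

variable {n : ℕ} (w : Equiv.Perm (Fin (n + 1)))

lemma castSucc_last_mem_InvSet_iff (s : Fin n) :
    (s.castSucc, Fin.last n) ∈ InvSet w ↔ w (Fin.last n) < w s.castSucc := by
  simp [InvSet, Fin.castSucc_lt_last]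

lemma apply_castSucc_lt_or_gt_apply_last (s : Fin n) :
    w s.castSucc < w (Fin.last n) ∨ w (Fin.last n) < w s.castSucc :=
  lt_or_gt_of_ne (w.injective.ne (Fin.castSucc_lt_last s).ne)

variable {w} {t : Equiv.Perm (Fin n)} {s : Fin n}

lemma castSucc_eq_of_redVal_of_lt (hts : (t s : ℕ) = redVal w s)
    (h : w s.castSucc < w (Fin.last n)) : (t s).castSucc = w s.castSucc := by
  ext
  simp [hts, redVal, Fin.lt_def.mp h]

lemma succ_eq_of_redVal_of_gt (hts : (t s : ℕ) = redVal w s)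
    (h : w (Fin.last n) < w s.castSucc) : (t s).succ = w s.castSucc := by
  rw [Fin.lt_def] at h
  ext
  simp only [Fin.val_succ, hts, redVal, if_neg (not_lt.mpr h.le)]
  omega

lemma redChar_redVal (hts : (t s : ℕ) = redVal w s) (χ : Fin (n + 1) → ℤ) :
    redChar χ (w (Fin.last n)) (t s) = χ (w s.castSucc) := by
  rcases apply_castSucc_lt_or_gt_apply_last w s with h | h
  · rw [redChar, if_pos (by rw [← Fin.val_castSucc, castSucc_eq_of_redVal_of_lt hts h]; exact h),
      castSucc_eq_of_redVal_of_lt hts h]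
  · have hsucc := succ_eq_of_redVal_of_gt hts h
    rw [redChar, if_neg, hsucc]
    rw [Fin.lt_def, ← hsucc, Fin.val_succ] at h
    omega

lemma rhoT_redVal (hts : (t s : ℕ) = redVal w s) :
    rhoT n (t s) = rho n (w s.castSucc) - 1 +
      (if (s.castSucc, Fin.last n) ∈ InvSet w then 1 else 0) := by
  simp only [castSucc_last_mem_InvSet_iff]
  rcases apply_castSucc_lt_or_gt_apply_last w s with h | h
  · rw [if_neg (not_lt.mpr h.le), ← castSucc_eq_of_redVal_of_lt hts h, add_zero]
    exact rhoT_eq_rho_castSucc_sub_one (t s)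
  · rw [if_pos h, ← succ_eq_of_redVal_of_gt hts h]
    simp only [rhoT, rho, Fin.val_succ]
    push_cast
    ring

end Reduction

theorem stmt_11 (n : ℕ) (w₁ w₂ w₃ : Equiv.Perm (Fin (n + 1)))
    (hdisj : Disjoint (InvSet w₁) (InvSet w₂))
    (hunion : InvSet w₁ ∪ InvSet w₂ = InvSet w₃)
    (lam mu nu : Fin (n + 1) → ℤ)
    (hchar : aActR (rho n) w₃⁻¹ nu = aActR (rho n) w₁⁻¹ lam + aActR (rho n) w₂⁻¹ mu)
    (t₁ t₂ t₃ : Equiv.Perm (Fin n))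
    (ht₁ : ∀ s : Fin n, (t₁ s : ℕ) = redVal w₁ s)
    (ht₂ : ∀ s : Fin n, (t₂ s : ℕ) = redVal w₂ s)
    (ht₃ : ∀ s : Fin n, (t₃ s : ℕ) = redVal w₃ s) :
    aActR (rhoT n) t₃⁻¹ (redChar nu (w₃ (Fin.last n))) =
      aActR (rhoT n) t₁⁻¹ (redChar lam (w₁ (Fin.last n))) +
        aActR (rhoT n) t₂⁻¹ (redChar mu (w₂ (Fin.last n))) := by
  funext s
  have hinv := ite_mem_union_of_disjoint hdisj (s.castSucc, Fin.last n)
  rw [hunion] at hinv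
  have hold := congrFun hchar s.castSucc
  have hrho := rhoT_eq_rho_castSucc_sub_one s
  simp only [Pi.add_apply, aActR_inv_apply] at hold ⊢
  rw [redChar_redVal (ht₁ s), redChar_redVal (ht₂ s), redChar_redVal (ht₃ s),
    rhoT_redVal (ht₁ s), rhoT_redVal (ht₂ s), rhoT_redVal (ht₃ s)]
  linarith
end

section
/- (Example 9, second observation, type A.) Let w be a permutation of Fin (n+1). The function ρ + w·ρ : Fin (n+1) → ℤ is weakly decreasing (dominant) if and only if there is a partition of {0, 1, …, n} into consecutive intervals such that w reverses each interval, i.e. for each interval [a, b] of the partition and each x with a ≤ x ≤ b one has w(x) = a + b − x. (Such w are exactly the longest elements w₀(P) of the Weyl groups of standard parabolic subgroups P of GL_{n+1}.) -/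
open Finset

/-!
Dominance of `ρ + w·ρ` means that `i ↦ i + σ i` is monotone, where `σ = w⁻¹`. Suppose `σ` maps
`[0, k)` to itself and let `p = σ⁻¹ k ≥ k`. Monotonicity gives `i + σ i ≤ p + σ p = k + p` on
`[k, p]`, so `σ` permutes `[k, p]`; comparing `∑ (i + σ i)` with `∑ (k + p)` forces
`i + σ i = k + p` there. So `σ` reverses the block `[k, p]`, and the next block starts at `p + 1`.
The blocks are therefore the level sets of `i + σ i`, and `σ` is an involution, so `σ = w`.
Conversely, if `w` reverses the blocks of an interval partition, then `w` is an involution and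
`i + w i = a i + b i` is monotone because both endpoints are.
-/

structure IsIntervalPartition {α : Type*} [LinearOrder α] (a b : α → α) : Prop where
  mem : ∀ x, a x ≤ x ∧ x ≤ b x
  eq_of_mem : ∀ x y, a x ≤ y → y ≤ b x → a y = a x ∧ b y = b x

namespace IsIntervalPartition

variable {α : Type*} [LinearOrder α] {a b : α → α}

theorem monotone_left (h : IsIntervalPartition a b) : Monotone a := by
  intro i j hij
  by_contra! hlt
  exact hlt.ne' (h.eq_of_mem j i (hlt.le.trans (h.mem i).1) (hij.trans (h.mem j).2)).1

theorem monotone_right (h : IsIntervalPartition a b) : Monotone b := by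
  intro i j hij
  by_contra! hlt
  exact hlt.ne (h.eq_of_mem i j ((h.mem i).1.trans hij) ((h.mem j).2.trans hlt.le)).2

theorem involutive_of_add_eq {m : ℕ} {a b v : Fin m → Fin m} (h : IsIntervalPartition a b)
    (hv : ∀ x, (v x : ℕ) + x = a x + b x) : Function.Involutive v := by
  intro x
  have hx := h.mem x
  have hvx := hv x
  simp only [Fin.le_def] at hx
  obtain ⟨ha, hb⟩ := h.eq_of_mem x (v x) (Fin.le_def.2 (by omega)) (Fin.le_def.2 (by omega))
  have hvvx := hv (v x)
  rw [ha, hb] at hvvx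
  exact Fin.ext (by omega)

end IsIntervalPartition

section Fiber

variable (f : ℕ → ℕ)

def addFiber (x : ℕ) : Finset ℕ := {y ∈ range (x + f x + 1) | y + f y = x + f x}

variable {f}

theorem mem_addFiber {x y : ℕ} : y ∈ addFiber f x ↔ y + f y = x + f x := by
  simp only [addFiber, mem_filter, mem_range, and_iff_right_iff_imp]
  omega

theorem addFiber_nonempty (x : ℕ) : (addFiber f x).Nonempty := ⟨x, mem_addFiber.2 rfl⟩

theorem addFiber_eq_of_mem {x y : ℕ} (h : y ∈ addFiber f x) : addFiber f y = addFiber f x := by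
  rw [addFiber, addFiber, mem_addFiber.1 h]

variable (f)

def fiberMin (x : ℕ) : ℕ := (addFiber f x).min' (addFiber_nonempty x)

def fiberMax (x : ℕ) : ℕ := (addFiber f x).max' (addFiber_nonempty x)

variable {f}

theorem fiberMin_add_apply (x : ℕ) : fiberMin f x + f (fiberMin f x) = x + f x :=
  mem_addFiber.1 (min'_mem _ _)

theorem fiberMax_add_apply (x : ℕ) : fiberMax f x + f (fiberMax f x) = x + f x :=
  mem_addFiber.1 (max'_mem _ _)

theorem isIntervalPartition_fiberMin_fiberMax (hf : Monotone fun i => i + f i) :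
    IsIntervalPartition (fiberMin f) (fiberMax f) where
  mem x := ⟨min'_le _ _ (mem_addFiber.2 rfl), le_max' _ _ (mem_addFiber.2 rfl)⟩
  eq_of_mem x y hxy hyx := by
    have hy : y ∈ addFiber f x := mem_addFiber.2 (le_antisymm
      (fiberMax_add_apply x ▸ hf hyx) (fiberMin_add_apply x ▸ hf hxy))
    simp only [fiberMin, fiberMax, addFiber_eq_of_mem hy, and_self]

end Fiber

namespace Equiv.Perm

variable {σ : Perm ℕ} {k : ℕ}

theorem map_range_eq_of_forall_lt (hk : ∀ i < k, σ i < k) :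
    (range k).map σ.toEmbedding = range k :=
  map_eq_of_subset fun _ hi => by
    obtain ⟨j, hj, rfl⟩ := mem_map.1 hi
    exact mem_range.2 (hk j (mem_range.1 hj))

theorem le_apply_of_forall_lt (hk : ∀ i < k, σ i < k) {i : ℕ} (hi : k ≤ i) : k ≤ σ i := by
  by_contra! h
  rw [← mem_range, ← map_range_eq_of_forall_lt hk, mem_map_equiv] at h
  simp only [symm_apply_apply, mem_range] at h
  omega

theorem le_symm_apply_of_forall_lt (hk : ∀ i < k, σ i < k) : k ≤ σ.symm k := by
  by_contra! h
  simpa using hk _ h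

theorem add_apply_eq_of_mem_Icc (hσ : Monotone fun i => i + σ i) (hk : ∀ i < k, σ i < k)
    {i : ℕ} (hi : i ∈ Icc k (σ.symm k)) : i + σ i = k + σ.symm k := by
  generalize hp : σ.symm k = p at hi ⊢
  rw [symm_apply_eq] at hp
  have hle : ∀ i ∈ Icc k p, i + σ i ≤ k + p := fun i hi => by
    have := hσ (mem_Icc.1 hi).2
    simp only [← hp] at this
    omega
  have hmaps : (Icc k p).map σ.toEmbedding = Icc k p := map_eq_of_subset fun _ hσj => by
    obtain ⟨j, hj, rfl⟩ := mem_map.1 hσj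
    have := hle j hj
    have := le_apply_of_forall_lt hk (mem_Icc.1 hj).1
    rw [mem_Icc] at hj ⊢
    rw [toEmbedding_apply]
    omega
  have hperm : ∑ j ∈ Icc k p, σ j = ∑ j ∈ Icc k p, j := by
    conv_rhs => rw [← hmaps, sum_map]
    rfl
  have hreflect : ∑ j ∈ Icc k p, (k + p - j) = ∑ j ∈ Icc k p, j := by
    refine sum_nbij' (fun j => k + p - j) (fun j => k + p - j) ?_ ?_ ?_ ?_ ?_ <;>
      intro j hj <;> simp only [mem_Icc] at hj ⊢ <;> omega
  have hsum : ∑ j ∈ Icc k p, (j + σ j) = ∑ j ∈ Icc k p, (k + p) := by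
    calc ∑ j ∈ Icc k p, (j + σ j) = ∑ j ∈ Icc k p, j + ∑ j ∈ Icc k p, j := by
          rw [sum_add_distrib, hperm]
      _ = ∑ j ∈ Icc k p, (j + (k + p - j)) := by rw [sum_add_distrib, hreflect]
      _ = ∑ j ∈ Icc k p, (k + p) := sum_congr rfl fun j hj => by
          simp only [mem_Icc] at hj; omega
  exact (sum_eq_sum_iff_of_le hle).1 hsum i hi

theorem forall_lt_symm_apply_add_one (hσ : Monotone fun i => i + σ i) (hk : ∀ i < k, σ i < k) :
    ∀ i < σ.symm k + 1, σ i < σ.symm k + 1 := by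
  intro i hi
  rcases lt_or_ge i k with hik | hki
  · have := hk i hik
    have := le_symm_apply_of_forall_lt hk
    omega
  · have := add_apply_eq_of_mem_Icc hσ hk (mem_Icc.2 ⟨hki, Nat.le_of_lt_succ hi⟩)
    omega

theorem exists_mem_Icc_symm_apply (hσ : Monotone fun i => i + σ i) (x : ℕ) :
    ∃ k, (∀ i < k, σ i < k) ∧ x ∈ Icc k (σ.symm k) := by
  simp only [mem_Icc]
  induction x with
  | zero => exact ⟨0, fun _ h => absurd h (Nat.not_lt_zero _), le_rfl, Nat.zero_le _⟩
  | succ x ih =>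
    obtain ⟨k, hk, hkx, hxp⟩ := ih
    rcases hxp.lt_or_eq with hlt | rfl
    · exact ⟨k, hk, by omega, hlt⟩
    · have hk' := forall_lt_symm_apply_add_one hσ hk
      exact ⟨_, hk', le_rfl, le_symm_apply_of_forall_lt hk'⟩

theorem add_apply_eq_fiberMin_add_fiberMax (hσ : Monotone fun i => i + σ i) (x : ℕ) :
    x + σ x = fiberMin σ x + fiberMax σ x := by
  obtain ⟨k, hk, hx⟩ := exists_mem_Icc_symm_apply hσ x
  set p := σ.symm k
  have hxg := add_apply_eq_of_mem_Icc hσ hk hx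
  have hkp : k ≤ p := le_symm_apply_of_forall_lt hk
  have hfiber : ∀ y, y ∈ addFiber σ x ↔ k ≤ y ∧ y ≤ p := by
    intro y
    rw [mem_addFiber, hxg]
    refine ⟨fun hy => ⟨?_, ?_⟩, fun hy => add_apply_eq_of_mem_Icc hσ hk (mem_Icc.2 hy)⟩
    · by_contra! hyk
      have := hk y hyk
      omega
    · by_contra! hpy
      have := le_apply_of_forall_lt (forall_lt_symm_apply_add_one hσ hk) hpy
      omega
  have hmin : fiberMin σ x = k :=
    (min'_eq_iff _ _ k).2 ⟨(hfiber k).2 ⟨le_rfl, hkp⟩, fun y hy => ((hfiber y).1 hy).1⟩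
  have hmax : fiberMax σ x = p :=
    (max'_eq_iff _ _ p).2 ⟨(hfiber p).2 ⟨hkp, le_rfl⟩, fun y hy => ((hfiber y).1 hy).2⟩
  rw [hmin, hmax, hxg]

theorem exists_isIntervalPartition_of_monotone {m : ℕ} (v : Perm (Fin m))
    (hv : Monotone fun i : Fin m => (i : ℕ) + v i) :
    ∃ a b : Fin m → Fin m, IsIntervalPartition a b ∧ ∀ x, (v x : ℕ) + x = a x + b x := by
  -- extend `v` by the identity outside `[0, m)`, so that the block argument runs on all of `ℕ`
  set σ := v.extendDomain Fin.equivSubtype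
  have hσ_lt {i : ℕ} (hi : i < m) : σ i = v ⟨i, hi⟩ :=
    extendDomain_apply_image v Fin.equivSubtype ⟨i, hi⟩
  have hσ_ge {i : ℕ} (hi : m ≤ i) : σ i = i := extendDomain_apply_not_subtype _ _ (by omega)
  have hσ : Monotone fun i => i + σ i := by
    intro i j hij
    rcases lt_or_ge j m with hj | hj
    · simpa only [hσ_lt hj, hσ_lt (hij.trans_lt hj)] using
        hv (show (⟨i, hij.trans_lt hj⟩ : Fin m) ≤ ⟨j, hj⟩ from hij)
    · rcases lt_or_ge i m with hi | hi
      · have := (v ⟨i, hi⟩).isLt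
        simp only [hσ_lt hi, hσ_ge hj]
        omega
      · simp only [hσ_ge hi, hσ_ge hj]
        omega
  have hmax (x : Fin m) : fiberMax σ x < m := by
    by_contra! hx
    have := fiberMax_add_apply (f := σ) x
    rw [hσ_ge hx, hσ_lt x.2] at this
    omega
  have h := isIntervalPartition_fiberMin_fiberMax hσ
  refine ⟨fun x => ⟨fiberMin σ x, (h.mem x).1.trans_lt x.2⟩, fun x => ⟨fiberMax σ x, hmax x⟩,
    ⟨fun x => h.mem x, fun x y hxy hyx => ?_⟩, fun x => ?_⟩
  · obtain ⟨hmin, hmax⟩ := h.eq_of_mem x y hxy hyx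
    exact ⟨Fin.ext hmin, Fin.ext hmax⟩
  · rw [← hσ_lt x.2, add_comm]
    exact add_apply_eq_fiberMin_add_fiberMax hσ x

end Equiv.Perm

theorem antitone_rho_add_iff {n : ℕ} (v : Fin (n + 1) → Fin (n + 1)) :
    (Antitone fun i => rho n i + rho n (v i)) ↔ Monotone fun i : Fin (n + 1) => (i : ℕ) + v i :=
  forall₂_congr fun i j => imp_congr_right fun _ => by simp only [rho]; omega

theorem stmt_12 (n : ℕ) (w : Equiv.Perm (Fin (n + 1))) :
    (Antitone fun i => rho n i + rho n (w⁻¹ i)) ↔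
      ∃ a b : Fin (n + 1) → Fin (n + 1),
        -- each `x` lies in its interval `[a x, b x]`
        (∀ x, a x ≤ x ∧ x ≤ b x) ∧
        -- the intervals form a partition: every point of the interval of `x` has
        -- the same interval
        (∀ x y, a x ≤ y → y ≤ b x → a y = a x ∧ b y = b x) ∧
        -- `w` reverses each interval: `w x = a x + b x - x`
        (∀ x, (w x : ℕ) + (x : ℕ) = (a x : ℕ) + (b x : ℕ)) := by
  rw [antitone_rho_add_iff]
  constructor
  · intro hmono
    obtain ⟨a, b, hab, hv⟩ := w⁻¹.exists_isIntervalPartition_of_monotone hmono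
    have hw : w⁻¹ = w := by
      have := Function.Involutive.symm_eq_self_of_involutive _ (hab.involutive_of_add_eq hv)
      rwa [← Equiv.Perm.inv_def, inv_inv, eq_comm] at this
    rw [hw] at hv
    exact ⟨a, b, hab.mem, hab.eq_of_mem, hv⟩
  · rintro ⟨a, b, hmem, hpart, hv⟩
    have hab : IsIntervalPartition a b := ⟨hmem, hpart⟩
    have hw : w⁻¹ = w :=
      Function.Involutive.symm_eq_self_of_involutive _ (hab.involutive_of_add_eq hv)
    intro i j hij
    simp only [hw]
    rw [add_comm, hv, add_comm (j : ℕ), hv]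
    exact add_le_add (hab.monotone_left hij) (hab.monotone_right hij)
end

section
/- The number of permutations w of Fin (n+1) such that ρ + w·ρ is weakly decreasing (dominant) is exactly 2^n. (Equivalently, there are exactly 2^n permutations that reverse each block of some partition of {0, 1, …, n} into consecutive intervals, matching the 2^n standard parabolic subgroups of GL_{n+1}.) -/
/-!
Write `σ = w⁻¹`; since `ρ i = n - i`, the weight `ρ + w • ρ` is dominant exactly when
`i ↦ i + σ i` is monotone. For such `σ` the last block is reversed: `σ` maps `σ last` back to
`last`, and if `σ last ≠ last`, the entry just before `last` is `σ last + 1`. So deleting the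
last position (and closing the gap in the values) gives a bijection between dominant
permutations of `Fin (n + 2)` and pairs of a dominant permutation `τ` of `Fin (n + 1)` with one
of two admissible new last values: `last`, or `τ last` (so that `τ last` itself moves up by
one). The count therefore doubles at each step.
-/

open Finset

theorem Equiv.optionCongr_removeNone {α β : Type*} {e : Option α ≃ Option β}
    (he : e none = none) : e.removeNone.optionCongr = e := by
  ext1 x
  cases x with
  | none => simp [he]
  | some x =>
    obtain ⟨y, hy⟩ := Option.ne_none_iff_exists'.mp
      (fun h => Option.some_ne_none x (e.injective (h.trans he.symm)))
    simp [removeNone_some e ⟨y, hy⟩]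

theorem Fin.val_succAbove_eq_ite {n : ℕ} (p : Fin (n + 1)) (i : Fin n) :
    (p.succAbove i : ℕ) = if (i : ℕ) < p then (i : ℕ) else i + 1 := by
  rcases lt_or_ge i.castSucc p with h | h
  · rw [succAbove_of_castSucc_lt _ _ h, if_pos (by simpa [Fin.lt_def] using h),
      val_castSucc]
  · rw [succAbove_of_le_castSucc _ _ h, if_neg (by simpa [Fin.le_def] using h), val_succ]

theorem Fin.val_succAbove_le_val_succAbove_add_one_iff {n : ℕ} (p : Fin (n + 1)) (i j : Fin n) :
    (p.succAbove i : ℕ) ≤ p.succAbove j + 1 ↔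
      (i : ℕ) ≤ j + 1 ∧ ¬ ((j : ℕ) < p ∧ (p : ℕ) ≤ i) := by
  rw [Fin.val_succAbove_eq_ite, Fin.val_succAbove_eq_ite]
  split_ifs <;> omega

theorem Nat.card_subtype_prod_eq_or_eq {α β : Type*} {P : β → Prop} {f g : β → α}
    (hfg : ∀ b, f b ≠ g b) :
    Nat.card {x : α × β // P x.2 ∧ (x.1 = f x.2 ∨ x.1 = g x.2)} = 2 * Nat.card {b // P b} := by
  rw [mul_comm, ← Fintype.card_bool, ← Nat.card_eq_fintype_card, ← Nat.card_prod]
  refine (Nat.card_congr (Equiv.ofBijective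
    (fun y : {b // P b} × Bool =>
      (⟨(cond y.2 (f y.1) (g y.1), y.1), y.1.2, by cases y.2 <;> simp⟩ :
        {x : α × β // P x.2 ∧ (x.1 = f x.2 ∨ x.1 = g x.2)})) ⟨?_, ?_⟩)).symm
  · rintro ⟨⟨b, hb⟩, c⟩ ⟨⟨b', hb'⟩, c'⟩ h
    simp only [Subtype.mk.injEq, Prod.mk.injEq] at h
    obtain ⟨hc, rfl⟩ := h
    cases c <;> cases c' <;> simp_all [(hfg _).symm]
  · rintro ⟨⟨a, b⟩, hb, h⟩
    obtain rfl | rfl : a = f b ∨ a = g b := h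
    exacts [⟨(⟨b, hb⟩, true), rfl⟩, ⟨(⟨b, hb⟩, false), rfl⟩]

namespace Equiv.Perm

variable {n : ℕ}

def IsDominant {m : ℕ} (σ : Perm (Fin m)) : Prop :=
  Monotone fun i : Fin m => (i : ℕ) + (σ i : ℕ)

theorem isDominant_iff_le_succ {σ : Perm (Fin (n + 1))} :
    σ.IsDominant ↔ ∀ i : Fin n, (σ i.castSucc : ℕ) ≤ σ i.succ + 1 := by
  refine Fin.monotone_iff_le_succ.trans (forall_congr' fun i => ?_)
  simp only [Fin.val_castSucc, Fin.val_succ]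
  omega

theorem IsDominant.add_le {m : ℕ} {σ : Perm (Fin m)} (hσ : σ.IsDominant) {i j : Fin m}
    (hij : i ≤ j) : (i : ℕ) + σ i ≤ j + σ j :=
  hσ hij

theorem IsDominant.apply_last {σ : Perm (Fin (n + 1))} (hσ : σ.IsDominant) :
    σ (Fin.last n) = σ.symm (Fin.last n) := by
  set m := σ.symm (Fin.last n)
  have hσm : σ m = Fin.last n := σ.apply_symm_apply _
  -- positions `≥ m` carry values `≥ m`, so `σ` permutes `Ici m`: the value `m` sits at some
  -- position `a ≥ m`, and monotonicity at `m ≤ a` forces `a = last n`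
  have hmaps : (Ici m).map σ.toEmbedding ⊆ Ici m := by
    intro x hx
    obtain ⟨a, ha, rfl⟩ := mem_map.mp hx
    have hle := hσ.add_le (mem_Ici.mp ha)
    rw [hσm, Fin.val_last] at hle
    simp only [mem_Ici, Fin.le_def, toEmbedding_apply]
    have := a.is_le
    omega
  obtain ⟨a, ha, hσa⟩ := mem_map.mp ((map_eq_of_subset hmaps).symm ▸ mem_Ici.mpr le_rfl : m ∈ _)
  rw [toEmbedding_apply] at hσa
  have hle := hσ.add_le (mem_Ici.mp ha)
  rw [hσm, hσa, Fin.val_last] at hle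
  have ha_last : a = Fin.last n := Fin.ext (by have := a.is_le; simp only [Fin.val_last]; omega)
  rw [← ha_last, hσa]

theorem IsDominant.val_apply_castSucc_last {σ : Perm (Fin (n + 2))} (hσ : σ.IsDominant)
    (h : σ (Fin.last (n + 1)) ≠ Fin.last (n + 1)) :
    (σ (Fin.last n).castSucc : ℕ) = σ (Fin.last (n + 1)) + 1 := by
  have hσs : σ (σ (Fin.last (n + 1))) = Fin.last (n + 1) := by
    rw [hσ.apply_last, apply_symm_apply]
  set s := σ (Fin.last (n + 1))
  have hs_le : s ≤ (Fin.last n).castSucc :=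
    Fin.le_castSucc_iff.mpr (Fin.lt_last_iff_ne_last.mpr h)
  have h₁ := hσ.add_le hs_le
  have h₂ := hσ.add_le (Fin.le_last (Fin.last n).castSucc)
  simp only [hσs, Fin.val_last, Fin.val_castSucc] at h₁ h₂
  omega

def insertLast (p : Fin (n + 1)) (τ : Perm (Fin n)) : Perm (Fin (n + 1)) :=
  (finSuccEquivLast.trans τ.optionCongr).trans (finSuccEquiv' p).symm

@[simp]
theorem insertLast_last (p : Fin (n + 1)) (τ : Perm (Fin n)) :
    insertLast p τ (Fin.last n) = p := by
  simp [insertLast]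

@[simp]
theorem insertLast_castSucc (p : Fin (n + 1)) (τ : Perm (Fin n)) (j : Fin n) :
    insertLast p τ j.castSucc = p.succAbove (τ j) := by
  simp [insertLast]

def insertLastEquiv : Fin (n + 1) × Perm (Fin n) ≃ Perm (Fin (n + 1)) where
  toFun x := insertLast x.1 x.2
  invFun σ := (σ (Fin.last n),
    (finSuccEquivLast.symm.trans (σ.trans (finSuccEquiv' (σ (Fin.last n))))).removeNone)
  left_inv := by
    rintro ⟨p, τ⟩
    have : finSuccEquivLast.symm.trans ((insertLast p τ).trans (finSuccEquiv' p)) =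
        τ.optionCongr := by
      ext1 x
      simp [insertLast]
    simp [this]
  right_inv σ := by
    set e := finSuccEquivLast.symm.trans (σ.trans (finSuccEquiv' (σ (Fin.last n))))
    have he : e none = none := by simp [e]
    change insertLast _ e.removeNone = σ
    ext1 x
    simp [insertLast, optionCongr_removeNone he, e]

theorem isDominant_insertLast_iff {p : Fin (n + 2)} {τ : Perm (Fin (n + 1))} :
    (insertLast p τ).IsDominant ↔
      τ.IsDominant ∧ (p = Fin.last (n + 1) ∨ p = (τ (Fin.last n)).castSucc) := by
  constructor
  · intro h
    have hτ : τ.IsDominant := isDominant_iff_le_succ.mpr fun j => by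
      have hj := isDominant_iff_le_succ.mp h j.castSucc
      rw [Fin.succ_castSucc, insertLast_castSucc, insertLast_castSucc,
        Fin.val_succAbove_le_val_succAbove_add_one_iff] at hj
      exact hj.1
    refine ⟨hτ, or_iff_not_imp_left.mpr fun hp => ?_⟩
    have hblock := h.val_apply_castSucc_last (by rwa [insertLast_last])
    rw [insertLast_castSucc, insertLast_last, Fin.val_succAbove_eq_ite] at hblock
    exact Fin.ext (by split_ifs at hblock <;> simp only [Fin.val_castSucc] <;> omega)
  · rintro ⟨hτ, hp⟩
    refine isDominant_iff_le_succ.mpr fun i => ?_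
    induction i using Fin.lastCases with
    | last =>
      rw [Fin.succ_last, insertLast_castSucc, insertLast_last, Fin.val_succAbove_eq_ite]
      rcases hp with rfl | rfl <;> split_ifs <;>
        simp only [Fin.val_last, Fin.val_castSucc] <;> omega
    | cast j =>
      rw [Fin.succ_castSucc, insertLast_castSucc, insertLast_castSucc,
        Fin.val_succAbove_le_val_succAbove_add_one_iff]
      have hj := isDominant_iff_le_succ.mp hτ j
      refine ⟨hj, fun ⟨hlt, hle⟩ => ?_⟩
      rcases hp with rfl | rfl
      · simp only [Fin.val_last] at hle
        omega
      · have hτj : τ j.castSucc = τ (Fin.last n) :=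
          Fin.ext (by simp only [Fin.val_castSucc] at hlt hle; omega)
        exact (Fin.castSucc_lt_last j).ne (τ.injective hτj)

theorem card_isDominant_succ_succ (n : ℕ) :
    Nat.card {σ : Perm (Fin (n + 2)) // σ.IsDominant} =
      2 * Nat.card {τ : Perm (Fin (n + 1)) // τ.IsDominant} := by
  rw [← Nat.card_subtype_prod_eq_or_eq (f := fun _ => Fin.last (n + 1))
    (g := fun τ : Perm (Fin (n + 1)) => (τ (Fin.last n)).castSucc)
    (fun _ => (Fin.castSucc_lt_last _).ne')]
  exact Nat.card_congr
    (insertLastEquiv.subtypeEquiv fun _ => isDominant_insertLast_iff.symm).symm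

theorem card_isDominant (n : ℕ) : Nat.card {σ : Perm (Fin (n + 1)) // σ.IsDominant} = 2 ^ n := by
  induction n with
  | zero =>
    have hall (σ : Perm (Fin 1)) : σ.IsDominant := Subsingleton.monotone _
    rw [Nat.card_congr (Equiv.subtypeUnivEquiv hall), Nat.card_perm]
    simp
  | succ n ih => rw [card_isDominant_succ_succ, ih, pow_succ, mul_comm]

theorem antitone_rho_add_iff (σ : Perm (Fin (n + 1))) :
    Antitone (fun i => rho n i + rho n (σ i)) ↔ σ.IsDominant := by
  refine forall₂_congr fun i j => imp_congr_right fun _ => ?_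
  simp only [rho]
  omega

end Equiv.Perm

theorem stmt_13 (n : ℕ) :
    Nat.card {w : Equiv.Perm (Fin (n + 1)) //
        Antitone fun i => rho n i + rho n (w⁻¹ i)} = 2 ^ n := by
  rw [← Equiv.Perm.card_isDominant n]
  exact Nat.card_congr ((Equiv.inv _).subtypeEquiv fun w =>
    Equiv.Perm.antitone_rho_add_iff w⁻¹)
end
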